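/- On unlabeled chains, no navigational expression in the language generated by ∅, id, diversity, the edge label, converse, composition, union, projections, coprojections, intersection, and difference (i.e., the full calculus of relations without transitive closure) is path-equivalent to the transitive closure E^+ of the edge relation: for every such expression e there is an unlabeled chain C on which the evaluation of e differs from E^+. -/
import Mathlib


/-- An unlabeled tree. -/
structure DTree (V : Type) where
  E : V → V → Prop
  acyclic : ∀ v, ¬ Relation.TransGen E v v
  root : V
  root_no_in : ∀ m, ¬ E m root
  in_unique : ∀ n, n ≠ root → ∃! m, E m n

/-- A chain: a tree in which every node has at most one child. -/
structure DChain (V : Type) extends DTree V where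
  at_most_one_child : ∀ m n n', E m n → E m n' → n = n'

/-- Expressions of the full calculus of relations (without transitive
closure) over one edge relation: ∅, id, diversity, the edge label,
converse, composition, union, projections, coprojections, intersection,
and difference. -/
inductive UExpr : Type
  | empty : UExpr
  | id : UExpr
  | di : UExpr
  | edge : UExpr
  | conv (e : UExpr) : UExpr
  | comp (e₁ e₂ : UExpr) : UExpr
  | union (e₁ e₂ : UExpr) : UExpr
  | pr1 (e : UExpr) : UExpr
  | pr2 (e : UExpr) : UExpr
  | copr1 (e : UExpr) : UExpr
  | copr2 (e : UExpr) : UExpr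
  | inter (e₁ e₂ : UExpr) : UExpr
  | diff (e₁ e₂ : UExpr) : UExpr

/-- Evaluation of an expression on an unlabeled graph. -/
def UExpr.eval {V : Type} (E : V → V → Prop) : UExpr → V → V → Prop
  | .empty => fun _ _ => False
  | .id => fun m n => m = n
  | .di => fun m n => m ≠ n
  | .edge => E
  | .conv e => fun m n => e.eval E n m
  | .comp e₁ e₂ => Relation.Comp (e₁.eval E) (e₂.eval E)
  | .union e₁ e₂ => fun m n => e₁.eval E m n ∨ e₂.eval E m n
  | .pr1 e => fun m n => m = n ∧ ∃ x, e.eval E m x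
  | .pr2 e => fun m n => m = n ∧ ∃ x, e.eval E x m
  | .copr1 e => fun m n => m = n ∧ ¬ ∃ x, e.eval E m x
  | .copr2 e => fun m n => m = n ∧ ¬ ∃ x, e.eval E x m
  | .inter e₁ e₂ => fun m n => e₁.eval E m n ∧ e₂.eval E m n
  | .diff e₁ e₂ => fun m n => e₁.eval E m n ∧ ¬ e₂.eval E m n

set_option maxHeartbeats 1000000

section ChainAux

def chE (N : ℕ) (i j : Fin N) : Prop := (j : ℕ) = (i : ℕ) + 1

def Sim (k N m n m' n' : ℤ) : Prop :=
  (m = m' ∨ (k ≤ m ∧ k ≤ m')) ∧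
  (m = m' ∨ (m ≤ N - 1 - k ∧ m' ≤ N - 1 - k)) ∧
  (n = n' ∨ (k ≤ n ∧ k ≤ n')) ∧
  (n = n' ∨ (n ≤ N - 1 - k ∧ n' ≤ N - 1 - k)) ∧
  (n - m = n' - m' ∨ ((n - m > k ∨ m - n > k) ∧ (n' - m' > k ∨ m' - n' > k)))

lemma Sim.mono {k k' N m n m' n' : ℤ} (hk : k' ≤ k) (h : Sim k N m n m' n') :
    Sim k' N m n m' n' := by
  unfold Sim at *; omega

lemma Sim.swap {k N m n m' n' : ℤ} (h : Sim k N m n m' n') :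
    Sim k N n m n' m' := by
  unfold Sim at *; omega

lemma Sim.symm {k N m n m' n' : ℤ} (h : Sim k N m n m' n') :
    Sim k N m' n' m n := by
  unfold Sim at *; omega

lemma pebble {k N m n x m' n' : ℤ} (hk : 1 ≤ k)
    (hm : 0 ≤ m ∧ m < N) (hn : 0 ≤ n ∧ n < N) (hx : 0 ≤ x ∧ x < N)
    (hm' : 0 ≤ m' ∧ m' < N) (hn' : 0 ≤ n' ∧ n' < N)
    (h : Sim (2 * k + 2) N m n m' n') :
    ∃ x', (0 ≤ x' ∧ x' < N) ∧ Sim k N m x m' x' ∧ Sim k N x n x' n' := by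
  unfold Sim at *
  by_cases h1 : x ≤ k
  · exact ⟨x, by omega⟩
  by_cases h2 : N - 1 - x ≤ k
  · exact ⟨x, by omega⟩
  by_cases h3 : x - m ≤ k ∧ m - x ≤ k
  · exact ⟨m' + (x - m), by omega⟩
  by_cases h4 : x - n ≤ k ∧ n - x ≤ k
  · exact ⟨n' + (x - n), by omega⟩
  have hgap : (2 * k + 2 ≤ min m' n') ∨ (2 * k + 2 ≤ max m' n' - min m' n')
      ∨ (2 * k + 2 ≤ N - 1 - max m' n') := by omega
  rcases hgap with h5 | h5 | h5
  · exact ⟨min m' n' - (k + 1), by omega⟩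
  · exact ⟨min m' n' + (k + 1), by omega⟩
  · exact ⟨max m' n' + (k + 1), by omega⟩

lemma pebbleFin {k : ℤ} (hk : 1 ≤ k) {N : ℕ} (m n x m' n' : Fin N)
    (h : Sim (2 * k + 2) N (m.val : ℤ) (n.val : ℤ) (m'.val : ℤ) (n'.val : ℤ)) :
    ∃ x' : Fin N, Sim k N (m.val : ℤ) (x.val : ℤ) (m'.val : ℤ) (x'.val : ℤ) ∧
      Sim k N (x.val : ℤ) (n.val : ℤ) (x'.val : ℤ) (n'.val : ℤ) := by
  have fb : ∀ a : Fin N, (0 : ℤ) ≤ (a.val : ℤ) ∧ (a.val : ℤ) < N := by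
    intro a
    constructor
    · exact Int.natCast_nonneg _
    · exact_mod_cast a.isLt
  obtain ⟨x', hb, s1, s2⟩ := pebble hk (fb m) (fb n) (fb x) (fb m') (fb n') h
  have hxN : x'.toNat < N := by omega
  refine ⟨⟨x'.toNat, hxN⟩, ?_, ?_⟩
  · show Sim k N _ _ _ ((x'.toNat : ℕ) : ℤ)
    rw [Int.toNat_of_nonneg hb.1]; exact s1
  · show Sim k N _ _ ((x'.toNat : ℕ) : ℤ) _
    rw [Int.toNat_of_nonneg hb.1]; exact s2

/-- Key lemma: every expression has a threshold `k` such that its evaluation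
on the chain of any length is invariant under `k`-similarity of pairs. -/
lemma key (e : UExpr) : ∃ k : ℤ, 1 ≤ k ∧ ∀ (N : ℕ) (m n m' n' : Fin N),
    Sim k N (m.val : ℤ) (n.val : ℤ) (m'.val : ℤ) (n'.val : ℤ) →
    e.eval (chE N) m n → e.eval (chE N) m' n' := by
  induction e with
  | empty => exact ⟨1, le_refl _, fun N m n m' n' _ h => h.elim⟩
  | id =>
    refine ⟨1, le_refl _, fun N m n m' n' h hmn => ?_⟩
    unfold Sim at h
    have : m.val = n.val := congrArg Fin.val hmn
    exact Fin.ext (by omega)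
  | di =>
    refine ⟨1, le_refl _, fun N m n m' n' h hmn => ?_⟩
    unfold Sim at h
    intro hc
    have : m'.val = n'.val := congrArg Fin.val hc
    exact hmn (Fin.ext (by omega))
  | edge =>
    refine ⟨1, le_refl _, fun N m n m' n' h hmn => ?_⟩
    unfold Sim at h
    have hmn' : (n : ℕ) = (m : ℕ) + 1 := hmn
    show (n' : ℕ) = (m' : ℕ) + 1
    omega
  | conv e ih =>
    obtain ⟨k, hk, H⟩ := ih
    exact ⟨k, hk, fun N m n m' n' h hmn => H N n m n' m' h.swap hmn⟩
  | comp e₁ e₂ ih₁ ih₂ =>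
    obtain ⟨k₁, hk₁, H₁⟩ := ih₁
    obtain ⟨k₂, hk₂, H₂⟩ := ih₂
    refine ⟨2 * max k₁ k₂ + 2, by omega, fun N m n m' n' h hmn => ?_⟩
    obtain ⟨x, hx1, hx2⟩ := hmn
    obtain ⟨x', s1, s2⟩ := pebbleFin (by omega) m n x m' n' h
    exact ⟨x', H₁ N m x m' x' (s1.mono (le_max_left _ _)) hx1,
      H₂ N x n x' n' (s2.mono (le_max_right _ _)) hx2⟩
  | union e₁ e₂ ih₁ ih₂ =>
    obtain ⟨k₁, hk₁, H₁⟩ := ih₁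
    obtain ⟨k₂, hk₂, H₂⟩ := ih₂
    refine ⟨max k₁ k₂, by omega, fun N m n m' n' h hmn => ?_⟩
    rcases hmn with hmn | hmn
    · exact Or.inl (H₁ N m n m' n' (h.mono (le_max_left _ _)) hmn)
    · exact Or.inr (H₂ N m n m' n' (h.mono (le_max_right _ _)) hmn)
  | pr1 e ih =>
    obtain ⟨k, hk, H⟩ := ih
    refine ⟨2 * k + 2, by omega, fun N m n m' n' h hmn => ?_⟩
    obtain ⟨rfl, x, hx⟩ := hmn
    have hmm' : m' = n' := by
      unfold Sim at h
      exact Fin.ext (by omega)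
    subst hmm'
    obtain ⟨x', s1, _⟩ := pebbleFin hk m m x m' m' h
    exact ⟨rfl, x', H N m x m' x' s1 hx⟩
  | pr2 e ih =>
    obtain ⟨k, hk, H⟩ := ih
    refine ⟨2 * k + 2, by omega, fun N m n m' n' h hmn => ?_⟩
    obtain ⟨rfl, x, hx⟩ := hmn
    have hmm' : m' = n' := by
      unfold Sim at h
      exact Fin.ext (by omega)
    subst hmm'
    obtain ⟨x', s1, _⟩ := pebbleFin hk m m x m' m' h
    exact ⟨rfl, x', H N x m x' m' s1.swap hx⟩
  | copr1 e ih =>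
    obtain ⟨k, hk, H⟩ := ih
    refine ⟨2 * k + 2, by omega, fun N m n m' n' h hmn => ?_⟩
    obtain ⟨rfl, hne⟩ := hmn
    have hmm' : m' = n' := by
      unfold Sim at h
      exact Fin.ext (by omega)
    subst hmm'
    refine ⟨rfl, fun ⟨x', hx'⟩ => hne ?_⟩
    obtain ⟨x, s1, _⟩ := pebbleFin hk m' m' x' m m h.symm
    exact ⟨x, H N m' x' m x s1 hx'⟩
  | copr2 e ih =>
    obtain ⟨k, hk, H⟩ := ih
    refine ⟨2 * k + 2, by omega, fun N m n m' n' h hmn => ?_⟩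
    obtain ⟨rfl, hne⟩ := hmn
    have hmm' : m' = n' := by
      unfold Sim at h
      exact Fin.ext (by omega)
    subst hmm'
    refine ⟨rfl, fun ⟨x', hx'⟩ => hne ?_⟩
    obtain ⟨x, s1, _⟩ := pebbleFin hk m' m' x' m m h.symm
    exact ⟨x, H N x' m' x m s1.swap hx'⟩
  | inter e₁ e₂ ih₁ ih₂ =>
    obtain ⟨k₁, hk₁, H₁⟩ := ih₁
    obtain ⟨k₂, hk₂, H₂⟩ := ih₂
    refine ⟨max k₁ k₂, by omega, fun N m n m' n' h hmn => ?_⟩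
    exact ⟨H₁ N m n m' n' (h.mono (le_max_left _ _)) hmn.1,
      H₂ N m n m' n' (h.mono (le_max_right _ _)) hmn.2⟩
  | diff e₁ e₂ ih₁ ih₂ =>
    obtain ⟨k₁, hk₁, H₁⟩ := ih₁
    obtain ⟨k₂, hk₂, H₂⟩ := ih₂
    refine ⟨max k₁ k₂, by omega, fun N m n m' n' h hmn => ?_⟩
    exact ⟨H₁ N m n m' n' (h.mono (le_max_left _ _)) hmn.1,
      fun hc => hmn.2 (H₂ N m' n' m n (h.symm.mono (le_max_right _ _)) hc)⟩

lemma tg_lt {N : ℕ} {i j : Fin N} (h : Relation.TransGen (chE N) i j) :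
    (i : ℕ) < (j : ℕ) := by
  induction h with
  | single h => unfold chE at h; omega
  | tail _ h ih => unfold chE at h; omega

lemma lt_tg {N : ℕ} : ∀ (c : ℕ) (i j : Fin N), (j : ℕ) = (i : ℕ) + c + 1 →
    Relation.TransGen (chE N) i j := by
  intro c
  induction c with
  | zero => exact fun i j h => Relation.TransGen.single h
  | succ c ih =>
    intro i j h
    have hj : (i : ℕ) + c + 1 < N := by have := j.isLt; omega
    exact Relation.TransGen.tail (ih i ⟨(i : ℕ) + c + 1, hj⟩ rfl)
      (show (j : ℕ) = ((i : ℕ) + c + 1) + 1 by omega)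

/-- The chain of length `N` as a `DChain`. -/
def chainC (N : ℕ) (hN : 0 < N) : DChain (Fin N) where
  E := chE N
  acyclic := fun v h => absurd (tg_lt h) (lt_irrefl _)
  root := ⟨0, hN⟩
  root_no_in := fun m h => by unfold chE at h; simp at h
  in_unique := by
    intro n hn
    have hn0 : 0 < (n : ℕ) := by
      rcases Nat.eq_zero_or_pos (n : ℕ) with h | h
      · exact absurd (Fin.ext h) hn
      · exact h
    refine ⟨⟨(n : ℕ) - 1, by omega⟩, ?_, ?_⟩
    · show (n : ℕ) = ((n : ℕ) - 1) + 1
      omega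
    · intro y hy
      unfold chE at hy
      exact Fin.ext (show (y : ℕ) = (n : ℕ) - 1 by omega)
  at_most_one_child := by
    intro m n n' h h'
    unfold chE at h h'
    exact Fin.ext (by omega)

end ChainAux

/-- On unlabeled chains, no expression of the calculus of relations
without transitive closure is path-equivalent to E⁺: for every such
expression there is an unlabeled chain on which it differs from the
transitive closure of the edge relation. -/
theorem stmt18 (e : UExpr) :
    ∃ (V : Type) (_ : Fintype V) (C : DChain V) (m n : V),
      ¬ (e.eval C.E m n ↔ Relation.TransGen C.E m n) := by
  obtain ⟨k, hk1, hk⟩ := key e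
  set K : ℕ := k.toNat with hK
  have hKk : (K : ℤ) = k := Int.toNat_of_nonneg (by omega)
  set N : ℕ := 8 * K + 8 with hNdef
  have hN : 0 < N := by omega
  have hK1 : 1 ≤ K := by omega
  set a : Fin N := ⟨2 * K + 2, by omega⟩ with ha
  set b : Fin N := ⟨6 * K + 5, by omega⟩ with hb
  have hsim : Sim k N (a.val : ℤ) (b.val : ℤ) (b.val : ℤ) (a.val : ℤ) := by
    unfold Sim
    show _ ∧ _
    have hav : (a.val : ℤ) = 2 * K + 2 := by simp [ha]
    have hbv : (b.val : ℤ) = 6 * K + 5 := by simp [hb]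
    rw [hav, hbv]
    push_cast
    omega
  have hab : Relation.TransGen (chE N) a b := by
    refine lt_tg (4 * K + 2) a b ?_
    show (6 * K + 5 : ℕ) = (2 * K + 2) + (4 * K + 2) + 1
    omega
  have hba : ¬ Relation.TransGen (chE N) b a := by
    intro h
    have := tg_lt h
    simp [ha, hb] at this
    omega
  by_cases hE : e.eval (chE N) a b
  · refine ⟨Fin N, inferInstance, chainC N hN, b, a, fun hiff => ?_⟩
    exact hba (hiff.mp (hk N a b b a hsim hE))
  · refine ⟨Fin N, inferInstance, chainC N hN, a, b, fun hiff => ?_⟩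
    exact hE (hiff.mpr hab)
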